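/- Let X be an n×(m−1) complex matrix with compact singular value decomposition X = U Σ V* (U ∈ ℂ^{n×r} and V ∈ ℂ^{(m−1)×r} with orthonormal columns, Σ ∈ ℂ^{r×r} diagonal with positive entries), let Y be n×(m−1), set A = Y X† = Y V Σ⁻¹ U* and à = U* A U = U* Y V Σ⁻¹. If w ∈ ℂ^r is an eigenvector of à with eigenvalue λ ≠ 0, i.e. à w = λ w, then the exact DMD mode φ = Y V Σ⁻¹ w is an eigenvector of A with the same eigenvalue: A φ = λ φ. -/
import Mathlib


open Matrix

/-- With `X = U Σ Vᴴ` a compact SVD, `A = Y X† = Y V Σ⁻¹ Uᴴ` and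
`Ã = Uᴴ A U = Uᴴ Y V Σ⁻¹`, if `w` is an eigenvector of `Ã` with eigenvalue `λ ≠ 0`,
then the exact DMD mode `φ = Y V Σ⁻¹ w` is an eigenvector of `A` with the same
eigenvalue: `A φ = λ φ`. -/
theorem statement3 (n m r : ℕ)
    (X Y : Matrix (Fin n) (Fin (m - 1)) ℂ)
    (U : Matrix (Fin n) (Fin r) ℂ)
    (V : Matrix (Fin (m - 1)) (Fin r) ℂ)
    (d : Fin r → ℝ) (hd : ∀ i, 0 < d i)
    (S : Matrix (Fin r) (Fin r) ℂ)
    (hS : S = Matrix.diagonal (fun i => (d i : ℂ)))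
    (hU : Uᴴ * U = 1) (hV : Vᴴ * V = 1)
    (hX : X = U * S * Vᴴ)
    (Xdag : Matrix (Fin (m - 1)) (Fin n) ℂ)
    (hXdag : Xdag = V * S⁻¹ * Uᴴ)
    (A : Matrix (Fin n) (Fin n) ℂ)
    (hA : A = Y * Xdag)
    (Atil : Matrix (Fin r) (Fin r) ℂ)
    (hAtil : Atil = Uᴴ * A * U)
    (w : Fin r → ℂ) (lam : ℂ) (hlam : lam ≠ 0)
    (hw : Atil.mulVec w = lam • w)
    (φ : Fin n → ℂ)
    (hφ : φ = (Y * V * S⁻¹).mulVec w) :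
    A.mulVec φ = lam • φ := by
  have hAtil' : Atil = Uᴴ * (Y * V * S⁻¹) := by
    rw [hAtil, hA, hXdag]
    simp only [Matrix.mul_assoc]
    rw [hU, Matrix.mul_one]
  have key : A * (Y * V * S⁻¹) = (Y * V * S⁻¹) * Atil := by
    rw [hA, hXdag, hAtil']
    simp only [Matrix.mul_assoc]
  rw [hφ, Matrix.mulVec_mulVec, key, ← Matrix.mulVec_mulVec, hw,
    Matrix.mulVec_smul]
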